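/- arXiv:1301.5565 — 2 statements merged into one kernel-verified Lean document; each statement's English description precedes it below -/
import Mathlib

section
/- With the same hypotheses, if wδ + kλ_j is not singular, then its index of regularity (the number of positive roots α with (wδ + kλ_j, α) < 0) equals the cardinality of {α ∈ Φ⁺ \ Φ_c : c·k < −(δ, w⁻¹α)}. -/
open scoped RealInnerProductSpace

/-! Pairing `w δ + k λ_j` with a root `α` gives `(δ, w⁻¹ α) + k (λ_j, α)`. On `Φc` this is
`(δ, w⁻¹ α) > 0`, since `w⁻¹ α` is positive, so only roots outside `Φc` can pair negatively, and
for those the pairing is `(δ, w⁻¹ α) + c k`. -/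

section

variable {E : Type*} [NormedAddCommGroup E] [InnerProductSpace ℝ E]

theorem inner_map_add_smul_left (w : E ≃ₗᵢ[ℝ] E) (δ μ α : E) (t : ℝ) :
    ⟪w δ + t • μ, α⟫ = ⟪δ, w.symm α⟫ + t * ⟪μ, α⟫ := by
  rw [inner_add_left, real_inner_smul_left, w.inner_map_eq_flip]

theorem inner_map_add_smul_pos_of_inner_eq_zero {w : E ≃ₗᵢ[ℝ] E} {δ μ α : E}
    (hδ : 0 < ⟪δ, w.symm α⟫) (hμ : ⟪μ, α⟫ = 0) (t : ℝ) : 0 < ⟪w δ + t • μ, α⟫ := by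
  rwa [inner_map_add_smul_left, hμ, mul_zero, add_zero]

theorem inner_map_add_smul_neg_iff {w : E ≃ₗᵢ[ℝ] E} {δ μ α : E} {c : ℝ} (hμ : ⟪μ, α⟫ = c)
    (t : ℝ) : ⟪w δ + t • μ, α⟫ < 0 ↔ c * t < -⟪δ, w.symm α⟫ := by
  rw [inner_map_add_smul_left, hμ, mul_comm]
  constructor <;> intro h <;> linarith

end

theorem index_of_regularity_general {E : Type*} [NormedAddCommGroup E] [InnerProductSpace ℝ E]
    (pos Φc : Set E)
    (δ : E) (hδpos : ∀ β ∈ pos, 0 < ⟪δ, β⟫)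
    (c : ℝ) (lamj : E)
    (hlam_nc : ∀ α ∈ pos \ Φc, ⟪lamj, α⟫ = c)
    (hlam_c : ∀ α ∈ Φc, ⟪lamj, α⟫ = 0)
    (w : E ≃ₗᵢ[ℝ] E) (hw : ∀ α ∈ Φc, w.symm α ∈ pos) (k : ℤ) :
    {α ∈ pos | ⟪w δ + (k : ℝ) • lamj, α⟫ < 0}.ncard =
      {α ∈ pos \ Φc | c * (k : ℝ) < -⟪δ, w.symm α⟫}.ncard := by
  congr 1
  ext α
  constructor
  · rintro ⟨hα, hneg⟩
    have hnc : α ∉ Φc := fun hαc =>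
      (inner_map_add_smul_pos_of_inner_eq_zero (hδpos _ (hw α hαc)) (hlam_c α hαc) k).not_gt hneg
    exact ⟨⟨hα, hnc⟩, (inner_map_add_smul_neg_iff (hlam_nc α ⟨hα, hnc⟩) k).1 hneg⟩
  · rintro ⟨hαnc, hlt⟩
    exact ⟨hαnc.1, (inner_map_add_smul_neg_iff (hlam_nc α hαnc) k).2 hlt⟩

/-- With the same hypotheses as the singularity criterion, if `w δ + k λ j` is not
singular, then its index of regularity (the number of positive roots `α` with
`(w δ + k λ j, α) < 0`) equals the cardinality of
`{α ∈ pos \ Φc : c·k < −(δ, w⁻¹ α)}`. -/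
theorem index_of_regularity {E : Type*} [NormedAddCommGroup E] [InnerProductSpace ℝ E]
    (pos Φc : Set E) (hsub : Φc ⊆ pos) (hfin : pos.Finite)
    (δ : E) (hδpos : ∀ β ∈ pos, 0 < ⟪δ, β⟫)
    (c : ℝ) (hc : 0 < c) (lamj : E)
    (hlam_nc : ∀ α ∈ pos \ Φc, ⟪lamj, α⟫ = c)
    (hlam_c : ∀ α ∈ Φc, ⟪lamj, α⟫ = 0)
    (w : E ≃ₗᵢ[ℝ] E) (hw : ∀ α ∈ Φc, w.symm α ∈ pos) (k : ℤ)
    (hns : ¬ ∃ α ∈ pos, ⟪w δ + (k : ℝ) • lamj, α⟫ = 0) :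
    {α ∈ pos | ⟪w δ + (k : ℝ) • lamj, α⟫ < 0}.ncard =
      {α ∈ pos \ Φc | c * (k : ℝ) < -⟪δ, w.symm α⟫}.ncard :=
  index_of_regularity_general pos Φc δ hδpos c lamj hlam_nc hlam_c w hw k
end

section
/- Let X = G/P of dimension n, f : Z → X a simple covering of degree N with respect to L = O_X(d), and ω_X = O_X(−d_0). If d(N−1) − d_0 > μ or d(N−1) − d_0 > n−1, where μ = max{(α,δ)/c : α ∈ Φ⁺}, then for all s = 0,…,n−2 and all i = 0,…,N−1: H^{s+1}(X, Ω^{n−s}_X ⊗ L^{(n−s)N−1−i} ⊗ ω_X) = 0 and H^{s+1}(X, Ω^{n−s−1}_X ⊗ L^{(n−s)N−2−i} ⊗ ω_X) = 0. -/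
/-!
Each twisting degree `d·m − d₀` occurring in the statement is at least `t := d(N−1) − d₀`,
because `m ≥ (n−s)N − 2 − i ≥ 2N − 2 − (N−1) = N − 1`; the degrees with `m = (n−s)N − 1 − i`
even exceed `t` by `d ≥ 1`, which absorbs the form degree `n − s ≤ n`. So the hypothesis on `t`
puts every group in the range of Bott-type vanishing.
-/

lemma Int.sub_one_le_mul_sub_two_sub {a N i : ℤ} (ha : 2 ≤ a) (hN : 0 ≤ N) (hi : i ≤ N - 1) :
    N - 1 ≤ a * N - 2 - i := by
  nlinarith

lemma twist_degree_le {d d0 a N i : ℤ} (hd : 0 ≤ d) (ha : 2 ≤ a) (hN : 0 ≤ N)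
    (hi : i ≤ N - 1) : d * (N - 1) - d0 ≤ d * (a * N - 2 - i) - d0 :=
  sub_le_sub_right
    (mul_le_mul_of_nonneg_left (Int.sub_one_le_mul_sub_two_sub ha hN hi) hd) d0

lemma bott_condition_of_le {μ : ℝ} {q : ℕ} {p t e k : ℤ} (h : μ < t ∨ p < t)
    (hq : (q : ℤ) ≤ p + e) (he : 0 ≤ e) (hk : t + e ≤ k) : μ < k ∨ (q : ℤ) < k := by
  rcases h with hμ | hp
  · have htk : (t : ℝ) ≤ k := by exact_mod_cast (by omega : t ≤ k)
    exact Or.inl (hμ.trans_le htk)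
  · exact Or.inr (by omega)

-- `Hcoh i q k` stands for `H^i(X, Ω^q_X(k))`, so `Ω^q ⊗ L^m ⊗ ω_X` has twist `d·m − d₀`.
/-- Let `X = G/P` of dimension `n`, `f : Z → X` a simple covering of degree `N` with
respect to `L = O_X(d)`, and `ω_X = O_X(−d_0)`.  If `d(N−1) − d_0 > μ` or
`d(N−1) − d_0 > n−1`, where `μ = max {(α,δ)/c : α ∈ Φ⁺}`, then for all
`s = 0, …, n−2` and all `i = 0, …, N−1`:
`H^{s+1}(X, Ω^{n−s}_X ⊗ L^{(n−s)N−1−i} ⊗ ω_X) = 0` and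
`H^{s+1}(X, Ω^{n−s−1}_X ⊗ L^{(n−s)N−2−i} ⊗ ω_X) = 0`.

Here `Hcoh i q k` models the cohomology group `H^i(X, Ω^q_X ⊗ O_X(k))` (so that
`Ω^q ⊗ L^m ⊗ ω_X = Ω^q(d·m − d_0)`), and the Bott-type vanishing lemma
`H^i(X, Ω^q(k)) = 0` for `i > 0` when `k > μ` or `k > q` is the hypothesis `hBott`. -/
theorem vanishing_for_torelli
    (n d d0 N : ℕ) (hn : 2 ≤ n) (hd : 0 < d) (hN : 2 ≤ N)
    (μ : ℝ)
    (Hcoh : ℕ → ℕ → ℤ → Type)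
    -- the Bott-type vanishing lemma on `X = G/P`
    (hBott : ∀ (i q : ℕ) (k : ℤ), 0 < i → (μ < (k : ℝ) ∨ (q : ℤ) < k) →
      Subsingleton (Hcoh i q k))
    -- the numerical hypothesis `d(N−1) − d_0 > μ` or `d(N−1) − d_0 > n−1`
    (h : μ < (((d : ℤ) * ((N : ℤ) - 1) - d0 : ℤ) : ℝ) ∨
      (n : ℤ) - 1 < (d : ℤ) * ((N : ℤ) - 1) - d0) :
    ∀ s : ℕ, s ≤ n - 2 → ∀ i : ℕ, i ≤ N - 1 →
      Subsingleton (Hcoh (s + 1) (n - s)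
        ((d : ℤ) * (((n : ℤ) - s) * N - 1 - i) - d0)) ∧
      Subsingleton (Hcoh (s + 1) (n - s - 1)
        ((d : ℤ) * (((n : ℤ) - s) * N - 2 - i) - d0)) := by
  intro s hs i hi
  have hdeg : (d : ℤ) * ((N : ℤ) - 1) - d0 ≤ (d : ℤ) * (((n : ℤ) - s) * N - 2 - i) - d0 :=
    twist_degree_le (by positivity) (by omega) (by positivity) (by omega)
  refine ⟨hBott _ _ _ s.succ_pos (bott_condition_of_le (e := 1) h ?_ zero_le_one ?_),
    hBott _ _ _ s.succ_pos (bott_condition_of_le (e := 0) h ?_ le_rfl ?_)⟩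
  · omega
  · have hd1 : (1 : ℤ) ≤ d := by exact_mod_cast hd
    linarith
  · omega
  · simpa using hdeg
end
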